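/- arXiv:2212.05579 — 6 statements merged into one kernel-verified Lean document; each statement's English description precedes it below -/
import Mathlib

section
/- Let A be a commutative ring which is a ℚ-algebra, I ⊆ A an ideal such that A is I-adically separated (⋂_{k≥0} I^k = 0) and I-adically complete, and let D : A → A be a ℚ-linear derivation (D(ab) = D(a)b + aD(b)) such that D(a) ∈ I² for every a ∈ A. Then there exists a unique ring automorphism φ : A → A such that for every a ∈ A and every k ∈ ℕ one has φ(a) − Σ_{j=0}^{k} (1/j!)·D^j(a) ∈ I^{k+1} (the exponential e^D of D). -/
open Finset

namespace ExpDerivAux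

variable {A : Type*} [CommRing A] [Algebra ℚ A]

/-- Divided iterate of `D`. -/
noncomputable def E (D : A →ₗ[ℚ] A) (j : ℕ) (a : A) : A :=
  ((j.factorial : ℚ))⁻¹ • ((⇑D)^[j] a)

lemma E_zero (D : A →ₗ[ℚ] A) (a : A) : E D 0 a = a := by
  simp [E]

lemma E_add (D : A →ₗ[ℚ] A) (j : ℕ) (a b : A) : E D j (a + b) = E D j a + E D j b := by
  simp [E, iterate_map_add, smul_add]

lemma D_E (D : A →ₗ[ℚ] A) (j : ℕ) (a : A) :
    D (E D j a) = ((j : ℚ) + 1) • E D (j + 1) a := by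
  have h : D ((⇑D)^[j] a) = (⇑D)^[j+1] a := (Function.iterate_succ_apply' (⇑D) j a).symm
  rw [E, map_smul, h, E, smul_smul]
  congr 1
  rw [Nat.factorial_succ]
  push_cast
  have h1 : (j.factorial : ℚ) ≠ 0 := Nat.cast_ne_zero.mpr j.factorial_ne_zero
  have h2 : ((j : ℚ) + 1) ≠ 0 := by positivity
  field_simp

lemma E_leibniz (D : A →ₗ[ℚ] A) (hD : ∀ a b : A, D (a * b) = D a * b + a * D b)
    (n : ℕ) (a b : A) :
    E D n (a * b) = ∑ i ∈ range (n + 1), E D i a * E D (n - i) b := by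
  induction n with
  | zero => simp [E_zero]
  | succ n ih =>
    have hne : ((n : ℚ) + 1) ≠ 0 := by positivity
    have key : ((n : ℚ) + 1) • E D (n + 1) (a * b)
        = ((n : ℚ) + 1) • ∑ i ∈ range (n + 2), E D i a * E D (n + 1 - i) b := by
      rw [← D_E, ih, map_sum]
      have hterm : ∀ i ∈ range (n + 1),
          D (E D i a * E D (n - i) b)
            = ((i : ℚ) + 1) • (E D (i + 1) a * E D (n - i) b)
              + (((n - i : ℕ) : ℚ) + 1) • (E D i a * E D (n - i + 1) b) := by
        intro i hi
        rw [hD, D_E, D_E, smul_mul_assoc, mul_smul_comm]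
      rw [Finset.sum_congr rfl hterm, Finset.sum_add_distrib]
      have h1 : ∑ i ∈ range (n + 1), ((i : ℚ) + 1) • (E D (i + 1) a * E D (n - i) b)
          = ∑ i ∈ range (n + 2), (i : ℚ) • (E D i a * E D (n + 1 - i) b) := by
        rw [Finset.sum_range_succ' (fun i => (i : ℚ) • (E D i a * E D (n + 1 - i) b)) (n + 1)]
        simp only [Nat.cast_zero, zero_smul, add_zero]
        refine Finset.sum_congr rfl fun i hi => ?_
        have hi' : i ≤ n := Nat.lt_succ_iff.mp (mem_range.mp hi)
        have : n + 1 - (i + 1) = n - i := by omega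
        rw [this]
        push_cast
        ring_nf
      have h2 : ∑ i ∈ range (n + 1), (((n - i : ℕ) : ℚ) + 1) • (E D i a * E D (n - i + 1) b)
          = ∑ i ∈ range (n + 2), ((n + 1 - i : ℕ) : ℚ) • (E D i a * E D (n + 1 - i) b) := by
        rw [Finset.sum_range_succ (fun i => ((n + 1 - i : ℕ) : ℚ) • (E D i a * E D (n + 1 - i) b)) (n + 1)]
        simp only [Nat.sub_self, Nat.cast_zero, zero_smul, add_zero]
        refine Finset.sum_congr rfl fun i hi => ?_
        have hi' : i ≤ n := Nat.lt_succ_iff.mp (mem_range.mp hi)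
        have e1 : n - i + 1 = n + 1 - i := by omega
        have e2 : ((n + 1 - i : ℕ) : ℚ) = ((n - i : ℕ) : ℚ) + 1 := by
          rw [Nat.cast_sub (by omega), Nat.cast_sub (by omega)]; push_cast; ring
        rw [e1, e2]
      rw [h1, h2, ← Finset.sum_add_distrib, Finset.smul_sum]
      refine Finset.sum_congr rfl fun i hi => ?_
      have hi' : i ≤ n + 1 := Nat.lt_succ_iff.mp (mem_range.mp hi)
      rw [← add_smul]
      congr 1
      rw [Nat.cast_sub hi']
      push_cast
      ring
    exact smul_right_injective A hne key


lemma smul_mem_ideal (J : Ideal A) (q : ℚ) {x : A} (hx : x ∈ J) : q • x ∈ J := by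
  rw [Algebra.smul_def]; exact J.mul_mem_left _ hx

lemma D_mem (D : A →ₗ[ℚ] A) (hD : ∀ a b : A, D (a * b) = D a * b + a * D b)
    (I : Ideal A) (hDI : ∀ a : A, D a ∈ I ^ 2) :
    ∀ m : ℕ, ∀ x ∈ I ^ m, D x ∈ I ^ (m + 1) := by
  intro m
  induction m with
  | zero => intro x _; exact Ideal.pow_le_pow_right (by norm_num) (hDI x)
  | succ m ih =>
    intro x hx
    rw [pow_succ] at hx
    refine Submodule.mul_induction_on hx (fun a ha b hb => ?_) (fun y z hy hz => ?_)
    · rw [hD]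
      refine Ideal.add_mem _ ?_ ?_
      · have := Ideal.mul_mem_mul (ih a ha) hb
        rwa [← pow_succ] at this
      · have := Ideal.mul_mem_mul ha (hDI b)
        rwa [← pow_add] at this
    · rw [map_add]; exact Ideal.add_mem _ hy hz

lemma iter_mem (D : A →ₗ[ℚ] A) (hD : ∀ a b : A, D (a * b) = D a * b + a * D b)
    (I : Ideal A) (hDI : ∀ a : A, D a ∈ I ^ 2) :
    ∀ (j m : ℕ) (a : A), a ∈ I ^ m → (⇑D)^[j] a ∈ I ^ (m + j) := by
  intro j
  induction j with
  | zero => intro m a ha; simpa using ha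
  | succ j ih =>
    intro m a ha
    rw [Function.iterate_succ_apply' (⇑D) j a]
    have := D_mem D hD I hDI (m + j) _ (ih m a ha)
    rwa [show m + j + 1 = m + (j + 1) by omega] at this

lemma E_mem (D : A →ₗ[ℚ] A) (hD : ∀ a b : A, D (a * b) = D a * b + a * D b)
    (I : Ideal A) (hDI : ∀ a : A, D a ∈ I ^ 2) {m : ℕ} {a : A} (ha : a ∈ I ^ m)
    (j : ℕ) (hj : 1 ≤ j) : E D j a ∈ I ^ (m + j) := by
  refine smul_mem_ideal _ _ ?_
  exact iter_mem D hD I hDI j m a ha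

lemma E_mem' (D : A →ₗ[ℚ] A) (hD : ∀ a b : A, D (a * b) = D a * b + a * D b)
    (I : Ideal A) (hDI : ∀ a : A, D a ∈ I ^ 2) (a : A)
    (j : ℕ) (hj : 1 ≤ j) : E D j a ∈ I ^ (j + 1) := by
  refine smul_mem_ideal _ _ ?_
  obtain ⟨j, rfl⟩ := Nat.exists_eq_add_of_le hj
  rw [add_comm 1 j, Function.iterate_succ_apply]
  have := iter_mem D hD I hDI j 2 (D a) (hDI a)
  rwa [show 2 + j = j + 1 + 1 by omega] at this


noncomputable def S (D : A →ₗ[ℚ] A) (k : ℕ) (a : A) : A :=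
  ∑ j ∈ range (k + 1), E D j a

lemma S_add (D : A →ₗ[ℚ] A) (k : ℕ) (a b : A) : S D k (a + b) = S D k a + S D k b := by
  simp [S, E_add, Finset.sum_add_distrib]

lemma D_one (D : A →ₗ[ℚ] A) (hD : ∀ a b : A, D (a * b) = D a * b + a * D b) : D 1 = 0 := by
  have := hD 1 1
  simp only [mul_one, one_mul] at this
  have h := right_eq_add.mp this
  exact h

lemma S_one (D : A →ₗ[ℚ] A) (hD : ∀ a b : A, D (a * b) = D a * b + a * D b) (k : ℕ) :
    S D k 1 = 1 := by
  have hE : ∀ j : ℕ, 1 ≤ j → E D j (1 : A) = 0 := by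
    intro j hj
    obtain ⟨j, rfl⟩ := Nat.exists_eq_add_of_le hj
    rw [E, add_comm 1 j, Function.iterate_succ_apply, D_one D hD]
    simp
  rw [S, Finset.sum_eq_single 0]
  · exact E_zero D 1
  · intro j _ hj; exact hE j (Nat.one_le_iff_ne_zero.mpr hj)
  · intro h; exact absurd (Finset.mem_range.mpr (Nat.succ_pos k)) h

lemma S_mul (D : A →ₗ[ℚ] A) (hD : ∀ a b : A, D (a * b) = D a * b + a * D b)
    (I : Ideal A) (hDI : ∀ a : A, D a ∈ I ^ 2) (k : ℕ) (a b : A) :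
    S D k a * S D k b - S D k (a * b) ∈ I ^ (k + 1) := by
  classical
  set T : ℕ × ℕ → A := fun p => E D p.1 a * E D p.2 b with hT
  have hprod : S D k a * S D k b = ∑ p ∈ (range (k+1)) ×ˢ (range (k+1)), T p := by
    rw [S, S, Finset.sum_mul_sum, Finset.sum_product]
  have hfilter : (Finset.filter (fun p : ℕ × ℕ => p.1 + p.2 ≤ k) ((range (k+1)) ×ˢ (range (k+1))))
      = (range (k+1)).biUnion (fun n => Finset.HasAntidiagonal.antidiagonal n) := by
    ext p
    simp only [Finset.mem_filter, Finset.mem_product, Finset.mem_range, Finset.mem_biUnion,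
      Finset.HasAntidiagonal.mem_antidiagonal]
    constructor
    · rintro ⟨⟨-, -⟩, h⟩; exact ⟨p.1 + p.2, by omega, rfl⟩
    · rintro ⟨n, hn, h⟩; omega
  have hSab : S D k (a * b) = ∑ p ∈ (Finset.filter (fun p : ℕ × ℕ => p.1 + p.2 ≤ k)
      ((range (k+1)) ×ˢ (range (k+1)))), T p := by
    rw [hfilter, Finset.sum_biUnion, S]
    · refine Finset.sum_congr rfl fun n hn => ?_
      rw [E_leibniz D hD, Finset.Nat.sum_antidiagonal_eq_sum_range_succ_mk]
    · intro x hx y hy hxy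
      simp only [Finset.disjoint_left, Finset.HasAntidiagonal.mem_antidiagonal]
      intro p hp hq
      exact hxy (hp ▸ hq)
  have hsplit := Finset.sum_filter_add_sum_filter_not ((range (k+1)) ×ˢ (range (k+1)))
    (fun p : ℕ × ℕ => p.1 + p.2 ≤ k) T
  have : S D k a * S D k b - S D k (a * b)
      = ∑ p ∈ (Finset.filter (fun p : ℕ × ℕ => ¬ p.1 + p.2 ≤ k)
          ((range (k+1)) ×ˢ (range (k+1)))), T p := by
    rw [hprod, hSab, ← hsplit]; ring
  rw [this]
  refine Ideal.sum_mem _ fun p hp => ?_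
  simp only [Finset.mem_filter, Finset.mem_product, Finset.mem_range] at hp
  obtain ⟨⟨h1, h2⟩, h3⟩ := hp
  have hi1 : 1 ≤ p.1 := by omega
  have hi2 : 1 ≤ p.2 := by omega
  have m1 := E_mem' D hD I hDI a p.1 hi1
  have m2 := E_mem' D hD I hDI b p.2 hi2
  have := Ideal.mul_mem_mul m1 m2
  rw [← pow_add] at this
  exact Ideal.pow_le_pow_right (by omega) this

lemma S_sub_self (D : A →ₗ[ℚ] A) (hD : ∀ a b : A, D (a * b) = D a * b + a * D b)
    (I : Ideal A) (hDI : ∀ a : A, D a ∈ I ^ 2) {m : ℕ} {a : A} (ha : a ∈ I ^ m) (k : ℕ) :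
    S D k a - a ∈ I ^ (m + 1) := by
  have : S D k a - a = ∑ j ∈ range k, E D (j + 1) a := by
    rw [S, Finset.sum_range_succ' (fun j => E D j a) k, E_zero]
    ring
  rw [this]
  refine Ideal.sum_mem _ fun j _ => ?_
  have := E_mem D hD I hDI ha (j + 1) (by omega)
  exact Ideal.pow_le_pow_right (by omega) this

end ExpDerivAux

open ExpDerivAux

/-- **Exponential of a filtration-decreasing derivation** (I-adic form of the flow
`e^{tv}` of Section 1.5). Let `A` be a commutative ring which is a `ℚ`-algebra,
`I ⊆ A` an ideal such that `A` is `I`-adically separated and complete, and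
`D : A → A` a `ℚ`-linear derivation with `D a ∈ I ^ 2` for every `a`. Then there is a
unique ring automorphism `φ` of `A` with
`φ a - ∑_{j ≤ k} (1/j!) • D^[j] a ∈ I ^ (k+1)` for all `a` and `k`. -/
theorem exp_of_derivation_exists_unique
    (A : Type*) [CommRing A] [Algebra ℚ A] (I : Ideal A)
    (hsep : ∀ x : A, (∀ k : ℕ, x ∈ I ^ k) → x = 0)
    (hcomp : ∀ a : ℕ → A, (∀ k : ℕ, a (k + 1) - a k ∈ I ^ k) →
      ∃ b : A, ∀ k : ℕ, b - a k ∈ I ^ k)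
    (D : A →ₗ[ℚ] A)
    (hD : ∀ a b : A, D (a * b) = D a * b + a * D b)
    (hDI : ∀ a : A, D a ∈ I ^ 2) :
    ∃! φ : A ≃+* A, ∀ (a : A) (k : ℕ),
      φ a - ∑ j ∈ Finset.range (k + 1), ((j.factorial : ℚ))⁻¹ • ((⇑D)^[j] a)
        ∈ I ^ (k + 1) := by
  classical
  have hsep2 : ∀ x y : A, (∀ k : ℕ, x - y ∈ I ^ (k + 1)) → x = y := by
    intro x y h
    have h0 : ∀ k : ℕ, x - y ∈ I ^ k := by
      intro k
      cases k with
      | zero => simp only [pow_zero, Ideal.one_eq_top]; exact Submodule.mem_top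
      | succ k => exact h k
    exact sub_eq_zero.mp (hsep (x - y) h0)
  have key : ∀ a : A, ∃ b : A, ∀ k : ℕ, b - S D k a ∈ I ^ (k + 1) := by
    intro a
    have hstep : ∀ k : ℕ, S D (k + 1) a - S D k a = E D (k + 1) a := by
      intro k
      rw [S, S, Finset.sum_range_succ (fun j => E D j a) (k + 1)]
      exact add_sub_cancel_left _ _
    obtain ⟨b, hb⟩ := hcomp (fun k => S D k a) (fun k => by
      show S D (k + 1) a - S D k a ∈ I ^ k
      rw [hstep k]
      exact Ideal.pow_le_pow_right (by omega) (E_mem' D hD I hDI a (k + 1) (by omega)))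
    refine ⟨b, fun k => ?_⟩
    have h1 := hb (k + 1)
    have h3 : E D (k + 1) a ∈ I ^ (k + 1) :=
      Ideal.pow_le_pow_right (by omega) (E_mem' D hD I hDI a (k + 1) (by omega))
    have heq : b - S D k a = (b - S D (k + 1) a) + E D (k + 1) a := by
      rw [← hstep k]; ring
    rw [heq]
    exact add_mem h1 h3
  choose f hf using key
  have hadd : ∀ a b : A, f (a + b) = f a + f b := by
    intro a b
    refine hsep2 _ _ fun k => ?_
    have h : f (a + b) - (f a + f b)
        = (f (a + b) - S D k (a + b)) - (f a - S D k a) - (f b - S D k b) := by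
      rw [S_add]; ring
    rw [h]
    exact sub_mem (sub_mem (hf (a + b) k) (hf a k)) (hf b k)
  have hone : f 1 = 1 := by
    refine hsep2 _ _ fun k => ?_
    have := hf 1 k
    rwa [S_one D hD] at this
  have hzero : f 0 = 0 := by
    have := hadd 0 0
    rw [add_zero] at this
    exact right_eq_add.mp this
  have hmul : ∀ a b : A, f (a * b) = f a * f b := by
    intro a b
    refine hsep2 _ _ fun k => ?_
    have h : f (a * b) - f a * f b
        = (f (a * b) - S D k (a * b)) - (S D k a * S D k b - S D k (a * b))
          - (f a - S D k a) * S D k b - f a * (f b - S D k b) := by ring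
    rw [h]
    refine sub_mem (sub_mem (sub_mem (hf (a * b) k) (S_mul D hD I hDI k a b))
      (Ideal.mul_mem_right _ _ (hf a k))) (Ideal.mul_mem_left _ _ (hf b k))
  have hsub : ∀ a b : A, f (a - b) = f a - f b := by
    intro a b
    have h1 : f (a - b) + f b = f a := by rw [← hadd, sub_add_cancel]
    exact eq_sub_of_add_eq h1
  have hN : ∀ (m : ℕ) (a : A), a ∈ I ^ m → f a - a ∈ I ^ (m + 1) := by
    intro m a ha
    have h : f a - a = (f a - S D m a) + (S D m a - a) := by ring
    rw [h]
    exact add_mem (hf a m) (S_sub_self D hD I hDI ha m)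
  have hinj : ∀ a b : A, f a = f b → a = b := by
    intro a b hab
    have hz : f (a - b) = 0 := by rw [hsub, hab, sub_self]
    have hmem : ∀ k : ℕ, a - b ∈ I ^ k := by
      intro k
      induction k with
      | zero => simp only [pow_zero, Ideal.one_eq_top]; exact Submodule.mem_top
      | succ k ih =>
        have := hN k (a - b) ih
        rw [hz, zero_sub] at this
        simpa using neg_mem this
    have := hsep (a - b) hmem
    exact sub_eq_zero.mp this
  have hsurj : ∀ b : A, ∃ a : A, f a = b := by
    intro b
    obtain ⟨x, hx0, hxs⟩ : ∃ x : ℕ → A, x 0 = b ∧ ∀ k, x (k + 1) = b - (f (x k) - x k) :=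
      ⟨fun k => Nat.rec b (fun _ xk => b - (f xk - xk)) k, rfl, fun k => rfl⟩
    have hxd : ∀ k : ℕ, x (k + 1) - x k ∈ I ^ (k + 1) := by
      intro k
      induction k with
      | zero =>
        rw [hxs, hx0]
        have := hN 0 b (by simp only [pow_zero, Ideal.one_eq_top]; exact Submodule.mem_top)
        have h : b - (f b - b) - b = -(f b - b) := by ring
        rw [h]
        exact neg_mem this
      | succ k ih =>
        have h : x (k + 2) - x (k + 1) = -(f (x (k + 1) - x k) - (x (k + 1) - x k)) := by
          rw [hsub, hxs (k + 1), hxs k]; ring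
        rw [h]
        exact neg_mem (hN (k + 1) _ ih)
    obtain ⟨y, hy⟩ := hcomp x fun k => Ideal.pow_le_pow_right (by omega) (hxd k)
    refine ⟨y, hsep2 _ _ fun k => ?_⟩
    have h : f y - b = (y - x (k + 1)) + (f (y - x k) - (y - x k)) := by
      rw [hsub, hxs k]; ring
    rw [h]
    refine add_mem (hy (k + 1)) (hN k _ (hy k))
  let F : A →+* A :=
    { toFun := f, map_one' := hone, map_mul' := fun a b => hmul a b,
      map_zero' := hzero, map_add' := fun a b => hadd a b }
  have hbij : Function.Bijective f := ⟨fun a b h => hinj a b h, hsurj⟩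
  refine ⟨RingEquiv.ofBijective F hbij, fun a k => ?_, fun ψ hψ => ?_⟩
  · have := hf a k
    show f a - _ ∈ _
    simpa [S, E] using this
  · ext a
    refine hsep2 _ _ fun k => ?_
    have h1 := hψ a k
    have h2 := hf a k
    have h : ψ a - (RingEquiv.ofBijective F hbij) a
        = (ψ a - ∑ j ∈ Finset.range (k + 1), ((j.factorial : ℚ))⁻¹ • ((⇑D)^[j] a))
          - (f a - S D k a) := by
      have hFa : (RingEquiv.ofBijective F hbij) a = f a := rfl
      have hS : S D k a = ∑ j ∈ Finset.range (k + 1), ((j.factorial : ℚ))⁻¹ • ((⇑D)^[j] a) := by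
        simp [S, E]
      rw [hFa, hS]
      ring
    rw [h]
    exact sub_mem h1 h2
end

section
/- Let A be a commutative ring which is a ℚ-algebra, I ⊆ A an ideal such that A is I-adically separated and complete, and D : A → A a ℚ-linear derivation with D(A) ⊆ I². For s ∈ ℚ let φ_s denote the unique ring automorphism of A with φ_s(a) − Σ_{j=0}^{k} (s^j/j!)·D^j(a) ∈ I^{k+1} for all a ∈ A, k ∈ ℕ (the exponential of sD). Then for all s, t ∈ ℚ one has φ_s ∘ φ_t = φ_{s+t}, and φ_0 = id_A (the one-parameter group law e^{sD}e^{tD} = e^{(s+t)D} of Section 1.5). -/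
/-!
Write `E_k(s)(a) = ∑_{j ≤ k} (s^j/j!) D^j a`. Since `D(I^n) ⊆ I^(n+1)` by the Leibniz rule, `D^j`
maps `I^m` into `I^(m+j)`, so any `φ` with `φ ≡ E_k(s) mod I^(k+1)` for all `k` satisfies the
sharper `φ x ≡ E_n(s)(x) mod I^(n+1+m)` for `x ∈ I^m`. Expanding `φ_s (φ_t a)` first by `φ_t` and
then each `φ_s (D^j a)` to order `k - j`, the binomial theorem and a reindexing of the triangle
`i + j ≤ k` give `φ_s ∘ φ_t ≡ E_k(s + t) mod I^(k+1)`. Separatedness makes such a `φ` unique,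
which yields both the group law and `φ_0 = id`.
-/

open Finset

theorem add_pow_div_factorial (s t : ℚ) (m : ℕ) :
    (s + t) ^ m / m.factorial =
      ∑ i ∈ range (m + 1), s ^ i / i.factorial * (t ^ (m - i) / (m - i).factorial) := by
  have h := congrArg (PowerSeries.coeff m) (PowerSeries.exp_mul_exp_eq_exp_add (A := ℚ) s t)
  simp only [PowerSeries.coeff_mul, PowerSeries.coeff_rescale, PowerSeries.coeff_exp,
    Finset.Nat.sum_antidiagonal_eq_sum_range_succ_mk] at h
  simpa [div_eq_mul_inv] using h.symm

section Filtration

variable {A : Type*} [CommRing A] {I : Ideal A} {D : A →+ A}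

theorem map_mem_pow_succ_of_leibniz (hD : ∀ a b, D (a * b) = D a * b + a * D b)
    (hDI : ∀ a, D a ∈ I ^ 2) {n : ℕ} {x : A} (hx : x ∈ I ^ n) : D x ∈ I ^ (n + 1) := by
  induction n generalizing x with
  | zero => exact Ideal.pow_le_pow_right (by norm_num) (hDI x)
  | succ n ih =>
    rw [pow_succ'] at hx
    refine Submodule.mul_induction_on hx (fun m hm y hy => ?_) (fun x y hx hy => ?_)
    · rw [hD]
      refine add_mem ?_ (by simpa [pow_succ'] using Ideal.mul_mem_mul hm (ih hy))
      have := Ideal.mul_mem_mul (hDI m) hy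
      rw [← pow_add] at this
      exact Ideal.pow_le_pow_right (by omega) this
    · simpa only [map_add] using add_mem hx hy

theorem iterate_map_mem_pow_add_of_leibniz (hD : ∀ a b, D (a * b) = D a * b + a * D b)
    (hDI : ∀ a, D a ∈ I ^ 2) {n : ℕ} {x : A} (hx : x ∈ I ^ n) (j : ℕ) :
    (⇑D)^[j] x ∈ I ^ (n + j) := by
  induction j with
  | zero => exact hx
  | succ j ih =>
    rw [Function.iterate_succ_apply']
    exact map_mem_pow_succ_of_leibniz hD hDI ih

variable [Algebra ℚ A]

def expTrunc (D : A →+ A) (s : ℚ) (n : ℕ) (x : A) : A :=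
  ∑ j ∈ range (n + 1), (s ^ j / j.factorial) • (⇑D)^[j] x

def IsAdicExp (I : Ideal A) (D : A →+ A) (s : ℚ) (φ : A →+ A) : Prop :=
  ∀ a k, φ a - expTrunc D s k a ∈ I ^ (k + 1)

theorem expTrunc_zero_left (n : ℕ) (x : A) : expTrunc D 0 n x = x := by
  rw [expTrunc, sum_range_succ', sum_eq_zero fun j _ => by simp]
  simp

theorem isAdicExp_zero : IsAdicExp I D 0 (AddMonoidHom.id A) := fun a k => by
  simp [expTrunc_zero_left]

theorem expTrunc_add (s t : ℚ) (k : ℕ) (a : A) :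
    expTrunc D (s + t) k a =
      ∑ j ∈ range (k + 1), (t ^ j / j.factorial) • expTrunc D s (k - j) ((⇑D)^[j] a) := by
  calc expTrunc D (s + t) k a
      = ∑ m ∈ range (k + 1), ∑ j ∈ range (m + 1),
          (t ^ j / j.factorial * (s ^ (m - j) / (m - j).factorial)) • (⇑D)^[(m - j) + j] a := by
        refine sum_congr rfl fun m _ => ?_
        rw [add_comm s, add_pow_div_factorial, sum_smul]
        refine sum_congr rfl fun j hj => ?_
        rw [Nat.sub_add_cancel (Nat.lt_succ_iff.mp (mem_range.mp hj))]
    _ = ∑ j ∈ range (k + 1), ∑ i ∈ range (k + 1 - j),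
          (t ^ j / j.factorial * (s ^ i / i.factorial)) • (⇑D)^[i + j] a :=
        sum_range_diag_flip (k + 1) fun j i =>
          (t ^ j / j.factorial * (s ^ i / i.factorial)) • (⇑D)^[i + j] a
    _ = _ := by
        refine sum_congr rfl fun j hj => ?_
        rw [expTrunc, smul_sum, Nat.sub_add_comm (Nat.lt_succ_iff.mp (mem_range.mp hj))]
        simp only [mul_smul, Function.iterate_add_apply]

theorem expTrunc_mem_pow (hD : ∀ a b, D (a * b) = D a * b + a * D b)
    (hDI : ∀ a, D a ∈ I ^ 2) {m : ℕ} {x : A} (hx : x ∈ I ^ m) (s : ℚ) (n : ℕ) :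
    expTrunc D s n x ∈ I ^ m :=
  sum_mem fun j _ => Submodule.smul_of_tower_mem _ _ <|
    Ideal.pow_le_pow_right (by omega) (iterate_map_mem_pow_add_of_leibniz hD hDI hx j)

theorem expTrunc_sub_expTrunc_mem_pow (hD : ∀ a b, D (a * b) = D a * b + a * D b)
    (hDI : ∀ a, D a ∈ I ^ 2) {m : ℕ} {x : A} (hx : x ∈ I ^ m) (s : ℚ) {n N : ℕ}
    (h : n ≤ N) : expTrunc D s N x - expTrunc D s n x ∈ I ^ (n + 1 + m) := by
  rw [expTrunc, expTrunc, ← sum_Ico_eq_sub _ (by omega)]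
  refine sum_mem fun j hj => Submodule.smul_of_tower_mem _ _ ?_
  rw [mem_Ico] at hj
  exact Ideal.pow_le_pow_right (by omega) (iterate_map_mem_pow_add_of_leibniz hD hDI hx j)

namespace IsAdicExp

variable {s t : ℚ} {φ ψ : A →+ A}

theorem sub_expTrunc_mem_pow (hD : ∀ a b, D (a * b) = D a * b + a * D b)
    (hDI : ∀ a, D a ∈ I ^ 2) (hφ : IsAdicExp I D s φ) {m : ℕ} {x : A} (hx : x ∈ I ^ m)
    (n : ℕ) : φ x - expTrunc D s n x ∈ I ^ (n + 1 + m) := by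
  rw [← sub_add_sub_cancel _ (expTrunc D s (n + m) x)]
  exact add_mem (by simpa only [add_right_comm] using hφ x (n + m))
    (expTrunc_sub_expTrunc_mem_pow hD hDI hx s (by omega))

theorem map_mem_pow (hD : ∀ a b, D (a * b) = D a * b + a * D b)
    (hDI : ∀ a, D a ∈ I ^ 2) (hφ : IsAdicExp I D s φ) {m : ℕ} {x : A} (hx : x ∈ I ^ m) :
    φ x ∈ I ^ m := by
  rw [← sub_add_cancel (φ x) (expTrunc D s 0 x)]
  exact add_mem (Ideal.pow_le_pow_right (by omega) (hφ.sub_expTrunc_mem_pow hD hDI hx 0))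
    (expTrunc_mem_pow hD hDI hx s 0)

theorem comp (hD : ∀ a b, D (a * b) = D a * b + a * D b)
    (hDI : ∀ a, D a ∈ I ^ 2) (hφ : IsAdicExp I D s φ) (hψ : IsAdicExp I D t ψ) :
    IsAdicExp I D (s + t) (φ.comp ψ) := fun a k => by
  have hsplit : φ (ψ a) - expTrunc D (s + t) k a = φ (ψ a - expTrunc D t k a) +
      ∑ j ∈ range (k + 1), (t ^ j / j.factorial) •
        (φ ((⇑D)^[j] a) - expTrunc D s (k - j) ((⇑D)^[j] a)) := by
    rw [expTrunc_add]
    simp only [map_sub, expTrunc, map_sum, map_rat_smul, smul_sub, sum_sub_distrib]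
    abel
  rw [AddMonoidHom.comp_apply, hsplit]
  refine add_mem (hφ.map_mem_pow hD hDI (hψ a k)) (sum_mem fun j hj => ?_)
  have hDj : (⇑D)^[j] a ∈ I ^ j := by
    simpa using iterate_map_mem_pow_add_of_leibniz hD hDI (n := 0) (by simp) j
  have hjk : k - j + 1 + j = k + 1 := by rw [mem_range] at hj; omega
  exact Submodule.smul_of_tower_mem _ _ (hjk ▸ hφ.sub_expTrunc_mem_pow hD hDI hDj _)

theorem unique (hsep : ∀ x : A, (∀ k : ℕ, x ∈ I ^ k) → x = 0) (hφ : IsAdicExp I D s φ)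
    (hψ : IsAdicExp I D s ψ) : φ = ψ := by
  ext a
  refine sub_eq_zero.mp (hsep _ fun k => ?_)
  cases k with
  | zero => simp
  | succ k => simpa using sub_mem (hφ a k) (hψ a k)

end IsAdicExp

end Filtration

theorem exp_of_derivation_one_parameter_group_general
    (A : Type*) [CommRing A] [Algebra ℚ A] (I : Ideal A)
    (hsep : ∀ x : A, (∀ k : ℕ, x ∈ I ^ k) → x = 0)
    (D : A →ₗ[ℚ] A)
    (hD : ∀ a b : A, D (a * b) = D a * b + a * D b)
    (hDI : ∀ a : A, D a ∈ I ^ 2) :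
    (∀ (s t : ℚ) (φs φt φst : A ≃+* A),
      (∀ (a : A) (k : ℕ),
        φs a - ∑ j ∈ Finset.range (k + 1), (s ^ j / (j.factorial : ℚ)) • ((⇑D)^[j] a)
          ∈ I ^ (k + 1)) →
      (∀ (a : A) (k : ℕ),
        φt a - ∑ j ∈ Finset.range (k + 1), (t ^ j / (j.factorial : ℚ)) • ((⇑D)^[j] a)
          ∈ I ^ (k + 1)) →
      (∀ (a : A) (k : ℕ),
        φst a - ∑ j ∈ Finset.range (k + 1),
            ((s + t) ^ j / (j.factorial : ℚ)) • ((⇑D)^[j] a) ∈ I ^ (k + 1)) →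
      ∀ a : A, φs (φt a) = φst a) ∧
    (∀ φ0 : A ≃+* A,
      (∀ (a : A) (k : ℕ),
        φ0 a - ∑ j ∈ Finset.range (k + 1),
            ((0 : ℚ) ^ j / (j.factorial : ℚ)) • ((⇑D)^[j] a) ∈ I ^ (k + 1)) →
      φ0 = RingEquiv.refl A) := by
  refine ⟨fun s t φs φt φst hs ht hst a => ?_, fun φ0 h0 => ?_⟩
  · have hst : IsAdicExp I D.toAddMonoidHom (s + t) (φst : A →+ A) := hst
    have hcomp : IsAdicExp I D.toAddMonoidHom (s + t) ((φs : A →+ A).comp φt) :=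
      IsAdicExp.comp hD hDI hs ht
    exact DFunLike.congr_fun (hcomp.unique hsep hst) a
  · have h0 : IsAdicExp I D.toAddMonoidHom 0 (φ0 : A →+ A) := h0
    ext a
    exact DFunLike.congr_fun (h0.unique hsep isAdicExp_zero) a

/-- **One-parameter group law for exponentials of a derivation** (Section 1.5:
`e^{sD} e^{tD} = e^{(s+t)D}` and `e^{0D} = id`). Let `A` be a commutative ring which is a
`ℚ`-algebra, `I ⊆ A` an ideal with `A` `I`-adically separated and complete, and
`D : A → A` a `ℚ`-linear derivation with `D(A) ⊆ I²`. If `φs`, `φt`, `φst` are ring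
automorphisms of `A` satisfying the defining congruences of `e^{sD}`, `e^{tD}` and
`e^{(s+t)D}` respectively, then `φs ∘ φt = φst`; and any automorphism satisfying the
defining congruence of `e^{0·D}` is the identity. -/
theorem exp_of_derivation_one_parameter_group
    (A : Type*) [CommRing A] [Algebra ℚ A] (I : Ideal A)
    (hsep : ∀ x : A, (∀ k : ℕ, x ∈ I ^ k) → x = 0)
    (hcomp : ∀ a : ℕ → A, (∀ k : ℕ, a (k + 1) - a k ∈ I ^ k) →
      ∃ b : A, ∀ k : ℕ, b - a k ∈ I ^ k)
    (D : A →ₗ[ℚ] A)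
    (hD : ∀ a b : A, D (a * b) = D a * b + a * D b)
    (hDI : ∀ a : A, D a ∈ I ^ 2) :
    (∀ (s t : ℚ) (φs φt φst : A ≃+* A),
      (∀ (a : A) (k : ℕ),
        φs a - ∑ j ∈ Finset.range (k + 1), (s ^ j / (j.factorial : ℚ)) • ((⇑D)^[j] a)
          ∈ I ^ (k + 1)) →
      (∀ (a : A) (k : ℕ),
        φt a - ∑ j ∈ Finset.range (k + 1), (t ^ j / (j.factorial : ℚ)) • ((⇑D)^[j] a)
          ∈ I ^ (k + 1)) →
      (∀ (a : A) (k : ℕ),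
        φst a - ∑ j ∈ Finset.range (k + 1),
            ((s + t) ^ j / (j.factorial : ℚ)) • ((⇑D)^[j] a) ∈ I ^ (k + 1)) →
      ∀ a : A, φs (φt a) = φst a) ∧
    (∀ φ0 : A ≃+* A,
      (∀ (a : A) (k : ℕ),
        φ0 a - ∑ j ∈ Finset.range (k + 1),
            ((0 : ℚ) ^ j / (j.factorial : ℚ)) • ((⇑D)^[j] a) ∈ I ^ (k + 1)) →
      φ0 = RingEquiv.refl A) :=
  exp_of_derivation_one_parameter_group_general A I hsep D hD hDI
end

section
/- Let A be a ℤ-graded commutative R-algebra and Q : A → A a graded derivation of degree +1. Let I₋ be the ideal of A generated by all homogeneous elements of negative degree. Then the ideal of A generated by I₋ together with Q(I₋) equals the ideal of A generated by I₋ together with Q(A_{−1}); in other words, A·Q[I₋] + I₋ = A·Q[A_{−1}] + I₋. (This is the splitting-free form of Lemma 2.10: 𝒪·Q[𝓘₋] + 𝓘₋ = ⟨κ⟩·𝒪 + 𝓘₋, where the curvature ideal is generated by Q applied to the degree −1 part.) -/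
/-!
A derivation of degree `+1` sends a homogeneous element of degree `i < 0` to degree
`i + 1 ≤ 0`: into `I₋` when `i < -1`, into `Q(A₋₁)` when `i = -1`. Since `J = A·Q[A₋₁] + I₋`
contains `I₋`, the Leibniz rule `Q (a * y) = Q a * y ± a * Q y` propagates `Q y ∈ J` from the
generators of `I₋` to all of `I₋`.
-/

namespace GradedDerivation

variable {R A : Type*} [CommRing R] [CommRing A] [Algebra R A]
  (𝒜 : ℤ → Submodule R A) [DirectSum.Decomposition 𝒜] {Q : A →ₗ[R] A}

theorem map_mul_mem
    (hQleib : ∀ (i : ℤ), ∀ a ∈ 𝒜 i, ∀ b : A,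
      Q (a * b) = Q a * b + (Int.negOnePow i : ℤ) • (a * Q b))
    {J : Ideal A} {y : A} (hy : y ∈ J) (hQy : Q y ∈ J) (a : A) :
    Q (a * y) ∈ J := by
  induction a using DirectSum.Decomposition.inductionOn 𝒜 with
  | zero => simp
  | homogeneous m =>
    rw [hQleib _ m m.2 y, zsmul_eq_mul]
    exact J.add_mem (J.mul_mem_left _ hy) (J.mul_mem_left _ (J.mul_mem_left _ hQy))
  | add m m' hm hm' =>
    rw [add_mul, map_add]
    exact J.add_mem hm hm'

theorem mapsTo_span
    (hQleib : ∀ (i : ℤ), ∀ a ∈ 𝒜 i, ∀ b : A,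
      Q (a * b) = Q a * b + (Int.negOnePow i : ℤ) • (a * Q b))
    {S : Set A} {J : Ideal A} (hSJ : S ⊆ J) (hQ : Set.MapsTo Q S J) :
    Set.MapsTo Q (Ideal.span S) J := by
  intro y hy
  induction hy using Submodule.span_induction with
  | mem x hx => exact hQ hx
  | zero => simp
  | add x y _ _ hx hy => simpa using J.add_mem hx hy
  | smul a y hy hQy =>
    exact map_mul_mem 𝒜 hQleib (Ideal.span_le.mpr hSJ hy) hQy a

end GradedDerivation

open GradedDerivation in
/-- **Lemma 2.10 (splitting-free form).** Let `A` be a `ℤ`-graded commutative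
`R`-algebra and `Q` a graded derivation of degree `+1`. Let `I₋` be the ideal generated
by all homogeneous elements of negative degree. Then the ideal generated by `I₋`
together with `Q(I₋)` equals the ideal generated by `I₋` together with `Q(A₋₁)`:
`A·Q[I₋] + I₋ = A·Q[A₋₁] + I₋`. -/
theorem ideal_QIminus_eq_ideal_QAminusOne
    (R A : Type*) [CommRing R] [CommRing A] [Algebra R A]
    (𝒜 : ℤ → Submodule R A) [GradedAlgebra 𝒜]
    (Q : A →ₗ[R] A)
    (hQdeg : ∀ (i : ℤ), ∀ a ∈ 𝒜 i, Q a ∈ 𝒜 (i + 1))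
    (hQleib : ∀ (i : ℤ), ∀ a ∈ 𝒜 i, ∀ b : A,
      Q (a * b) = Q a * b + (Int.negOnePow i : ℤ) • (a * Q b))
    (Iminus : Ideal A)
    (hIminus : Iminus = Ideal.span {a : A | ∃ i : ℤ, i < 0 ∧ a ∈ 𝒜 i}) :
    Ideal.span (⇑Q '' (Iminus : Set A)) ⊔ Iminus
      = Ideal.span (⇑Q '' ((𝒜 (-1) : Submodule R A) : Set A)) ⊔ Iminus := by
  subst hIminus
  refine le_antisymm (sup_le ?_ le_sup_right) ?_
  · rw [Ideal.span_le, ← Set.mapsTo_iff_image_subset]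
    refine mapsTo_span 𝒜 hQleib (fun _ hx => Ideal.mem_sup_right (Ideal.subset_span hx)) ?_
    rintro g ⟨i, hi, hg⟩
    obtain hi' | rfl : i + 1 < 0 ∨ i = -1 := by omega
    · exact Ideal.mem_sup_right (Ideal.subset_span ⟨i + 1, hi', hQdeg i g hg⟩)
    · exact Ideal.mem_sup_left (Ideal.subset_span ⟨g, hg, rfl⟩)
  · gcongr
    exact fun a ha => Ideal.subset_span ⟨-1, by norm_num, ha⟩
end

section
/- Let M be a smooth finite-dimensional real manifold which is Hausdorff and σ-compact, and let E → M be a smooth real vector bundle of finite rank. If κ is a smooth section of E such that κ(m) ≠ 0 for every m ∈ M, then there exists a smooth section α of the dual bundle E* (the bundle whose fiber at m is the space of continuous linear maps E_m → ℝ) such that ⟨κ, α⟩ = 1, i.e. α(m)(κ(m)) = 1 for every m ∈ M. (This is the key step in the proof of Lemma 2.2: a nowhere-vanishing section of a vector bundle can be paired to 1 with a smooth section of the dual bundle.) -/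
open Manifold Bundle

/-!
Near a point `x₀`, pick a functional `ξ` on the model fibre with `ξ (κ x₀) = 1` in the
trivialization at `x₀`; transported to the nearby fibres and divided by its pairing with `κ`
(still nonzero close to `x₀`), it is a local smooth section `α` of `E*` with `α (κ) = 1`.
Since `α (κ x) = 1` is an affine, hence convex, condition on `α x`, a smooth partition of unity
glues these local solutions into a global one.
-/

section

variable {𝕜 B F F₂ : Type*} [NontriviallyNormedField 𝕜] {n : WithTop ℕ∞}
  {EB : Type*} [NormedAddCommGroup EB] [NormedSpace 𝕜 EB] {HB : Type*} [TopologicalSpace HB]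
  {IB : ModelWithCorners 𝕜 EB HB} [TopologicalSpace B] [ChartedSpace HB B]
  {E : B → Type*} [∀ x, AddCommGroup (E x)] [∀ x, Module 𝕜 (E x)]
  [NormedAddCommGroup F] [NormedSpace 𝕜 F] [NormedAddCommGroup F₂] [NormedSpace 𝕜 F₂]
  [TopologicalSpace (TotalSpace F E)] [∀ x, TopologicalSpace (E x)]
  [FiberBundle F E] [VectorBundle 𝕜 F E] [ContMDiffVectorBundle n F E IB]

lemma Bundle.Trivialization.contMDiffAt_comp_continuousLinearMapAt
    (e : Trivialization F (TotalSpace.proj : TotalSpace F E → B)) [MemTrivializationAtlas e]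
    (ξ : F →L[𝕜] F₂) {x : B} (hx : x ∈ e.baseSet) :
    ContMDiffAt IB (IB.prod 𝓘(𝕜, F →L[𝕜] F₂)) n
      (fun m ↦ TotalSpace.mk' (F →L[𝕜] F₂) (E := fun b ↦ E b →L[𝕜] Trivial B F₂ b) m
        (ξ.comp (e.continuousLinearMapAt 𝕜 m))) x := by
  have hx' : x ∈ (trivializationAt F E x).baseSet := mem_baseSet_trivializationAt F E x
  refine contMDiffAt_totalSpace.mpr ⟨contMDiffAt_id, ?_⟩
  apply ((contMDiffAt_const (c := ξ)).clm_comp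
    (contMDiffAt_coordChangeL hx' hx)).congr_of_eventuallyEq
  filter_upwards [e.open_baseSet.mem_nhds hx,
    (trivializationAt F E x).open_baseSet.mem_nhds hx'] with b hb hb'
  ext v
  simp [hom_trivializationAt_apply, ContinuousLinearMap.inCoordinates,
    coordChangeL_apply' _ e ⟨hb', hb⟩, coe_linearMapAt_of_mem _ hb,
    symmL_apply _ hb', (trivializationAt F E x).mk_symm hb']


lemma exists_contMDiffOn_dual_section_apply_eq_one [SeparatingDual 𝕜 F]
    {κ : ∀ x, E x} (hκ : ContMDiff IB (IB.prod 𝓘(𝕜, F)) n (fun x ↦ TotalSpace.mk' F x (κ x)))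
    {x₀ : B} (hκx₀ : κ x₀ ≠ 0) :
    ∃ U ∈ nhds x₀, ∃ α : ∀ x, E x →L[𝕜] Trivial B 𝕜 x,
      ContMDiffOn IB (IB.prod 𝓘(𝕜, F →L[𝕜] 𝕜)) n
        (fun x ↦ TotalSpace.mk' (F →L[𝕜] 𝕜) (E := fun b ↦ E b →L[𝕜] Trivial B 𝕜 b) x (α x)) U ∧
      ∀ x ∈ U, α x (κ x) = 1 := by
  set e := trivializationAt F E x₀
  have hx₀ : x₀ ∈ e.baseSet := mem_baseSet_trivializationAt F E x₀
  obtain ⟨ξ, hξ⟩ : ∃ ξ : F →L[𝕜] 𝕜, ξ (e ⟨x₀, κ x₀⟩).2 = 1 :=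
    SeparatingDual.exists_eq_one ((e.continuousLinearEquivAt 𝕜 x₀ hx₀).map_ne_zero_iff.2 hκx₀)
  set φ : ∀ x, E x →L[𝕜] Trivial B 𝕜 x := fun x ↦ ξ.comp (e.continuousLinearMapAt 𝕜 x)
  set g : B → 𝕜 := fun x ↦ φ x (κ x)
  have hg : ContMDiffOn IB 𝓘(𝕜) n g e.baseSet := by
    refine (ξ.contMDiff.comp_contMDiffOn
      (e.contMDiffOn_section_baseSet_iff.1 hκ.contMDiffOn)).congr fun x hx ↦ ?_
    simp [g, φ, e.coe_linearMapAt_of_mem hx]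
  refine ⟨e.baseSet ∩ g ⁻¹' {0}ᶜ, ?_, fun x ↦ (g x)⁻¹ • φ x, ?_, fun x hx ↦ ?_⟩
  · refine (hg.continuousOn.isOpen_inter_preimage e.open_baseSet
      isOpen_compl_singleton).mem_nhds ⟨hx₀, ?_⟩
    simp [g, φ, e.coe_linearMapAt_of_mem hx₀, hξ]
  · exact ((hg.mono Set.inter_subset_left).inv₀ fun x hx ↦ hx.2).smul_section
      fun x hx ↦ (e.contMDiffAt_comp_continuousLinearMapAt ξ hx.1).contMDiffWithinAt
  · exact inv_mul_cancel₀ hx.2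

end

theorem exists_dual_section_pairing_one_of_nowhere_vanishing_general
    {EM : Type*} [NormedAddCommGroup EM] [NormedSpace ℝ EM] [FiniteDimensional ℝ EM]
    {HM : Type*} [TopologicalSpace HM] (IM : ModelWithCorners ℝ EM HM)
    (M : Type*) [TopologicalSpace M] [ChartedSpace HM M]
    [IsManifold IM (⊤ : ℕ∞) M] [T2Space M] [SigmaCompactSpace M]
    (F : Type*) [NormedAddCommGroup F] [NormedSpace ℝ F]
    (E : M → Type*) [TopologicalSpace (Bundle.TotalSpace F E)]
    [∀ x, TopologicalSpace (E x)] [∀ x, AddCommGroup (E x)] [∀ x, Module ℝ (E x)]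
    [∀ x, IsTopologicalAddGroup (E x)] [∀ x, ContinuousSMul ℝ (E x)]
    [FiberBundle F E] [VectorBundle ℝ F E] [ContMDiffVectorBundle (⊤ : ℕ∞) F E IM]
    (κ : ContMDiffSection IM F (⊤ : ℕ∞) E)
    (hκ : ∀ m : M, κ m ≠ 0) :
    ∃ α : ContMDiffSection IM (F →L[ℝ] ℝ) (⊤ : ℕ∞)
        (fun x ↦ E x →SL[RingHom.id ℝ] Bundle.Trivial M ℝ x),
      ∀ m : M, α m (κ m) = 1 :=
  exists_contMDiffSection_forall_mem_convex_of_local IM (fun x ↦ E x →L[ℝ] Trivial M ℝ x)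
    (fun x ↦ {φ | φ (κ x) = 1})
    (fun x _ hφ _ hψ _ _ _ _ hab ↦ by simp_all)
    fun x₀ ↦ exists_contMDiffOn_dual_section_apply_eq_one κ.contMDiff (hκ x₀)

/-- **Key step of the proof of Lemma 2.2.** Let `M` be a smooth finite-dimensional real
manifold, Hausdorff and σ-compact, and `E → M` a smooth real vector bundle of finite
rank (model fiber `F`). If `κ` is a smooth section of `E` which is nowhere zero, then
there is a smooth section `α` of the dual bundle `E*` (the bundle of continuous linear
maps `E_m → ℝ`) with `⟨κ, α⟩ = 1`, i.e. `α m (κ m) = 1` for all `m`. -/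
theorem exists_dual_section_pairing_one_of_nowhere_vanishing
    {EM : Type*} [NormedAddCommGroup EM] [NormedSpace ℝ EM] [FiniteDimensional ℝ EM]
    {HM : Type*} [TopologicalSpace HM] (IM : ModelWithCorners ℝ EM HM)
    (M : Type*) [TopologicalSpace M] [ChartedSpace HM M]
    [IsManifold IM (⊤ : ℕ∞) M] [T2Space M] [SigmaCompactSpace M]
    (F : Type*) [NormedAddCommGroup F] [NormedSpace ℝ F] [FiniteDimensional ℝ F]
    (E : M → Type*) [TopologicalSpace (Bundle.TotalSpace F E)]
    [∀ x, TopologicalSpace (E x)] [∀ x, AddCommGroup (E x)] [∀ x, Module ℝ (E x)]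
    [∀ x, IsTopologicalAddGroup (E x)] [∀ x, ContinuousSMul ℝ (E x)]
    [FiberBundle F E] [VectorBundle ℝ F E] [ContMDiffVectorBundle (⊤ : ℕ∞) F E IM]
    (κ : ContMDiffSection IM F (⊤ : ℕ∞) E)
    (hκ : ∀ m : M, κ m ≠ 0) :
    ∃ α : ContMDiffSection IM (F →L[ℝ] ℝ) (⊤ : ℕ∞)
        (fun x ↦ E x →SL[RingHom.id ℝ] Bundle.Trivial M ℝ x),
      ∀ m : M, α m (κ m) = 1 :=
  exists_dual_section_pairing_one_of_nowhere_vanishing_general IM M F E κ hκ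
end

section
/- Let A = ℝ[x,y]/(xy) be the quotient of the real polynomial ring in two variables by the ideal generated by xy. For every ℝ-linear derivation d : A → A there exist unique one-variable polynomials f, g ∈ ℝ[t] such that d is induced by the derivation x·f(x)·∂/∂x + y·g(y)·∂/∂y of ℝ[x,y]; i.e. for every h ∈ ℝ[x,y], d([h]) = [ x·f(x)·∂h/∂x + y·g(y)·∂h/∂y ], where [·] denotes the class in A. In particular the assignment (f,g) ↦ d is an ℝ-linear bijection from ℝ[t] × ℝ[t] onto the space of ℝ-derivations of A. (This realizes the claim of Example 4.2 that H⁰(𝔛(𝒪₋), ad_δ) ≅ { x f(x) ∂/∂x + y g(y) ∂/∂y } for the Koszul–Tate resolution δ = xy ∂/∂ξ, combined with the isomorphism H⁰ ≅ Der(C^∞(M₀)/I) of Proposition 3.11, in the affine setting.) -/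
/-!
`ℝ[x,y]/(xy)` is the coordinate ring of the union of the two coordinate axes: a polynomial lies
in `(xy)` exactly when its restrictions to both axes vanish. A derivation `d` of the quotient is
determined by `d x` and `d y`. Applying `d` to `xy = 0` gives `x·d y + y·d x = 0`; restricted to
the `x`-axis this says that `d y` vanishes there, so `d y` has no constant term on the `y`-axis and
`d y ≡ y·g(y)` modulo `(xy)`. Symmetrically `d x ≡ x·f(x)`. Uniqueness of `f` and `g` follows
by restricting `x·f(x)` and `y·g(y)` to their axes.
-/

open MvPolynomial

section

variable {K : Type*} [CommRing K]

local notation "𝔞" => Ideal.span {(X 0 * X 1 : MvPolynomial (Fin 2) K)}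

noncomputable def restrictToAxis (j : Fin 2) : MvPolynomial (Fin 2) K →ₐ[K] Polynomial K :=
  aeval (Pi.single j Polynomial.X)

@[simp]
lemma restrictToAxis_X_self (j : Fin 2) :
    restrictToAxis j (X j : MvPolynomial (Fin 2) K) = Polynomial.X := by
  simp [restrictToAxis]

@[simp]
lemma restrictToAxis_X_of_ne {i j : Fin 2} (h : i ≠ j) :
    restrictToAxis j (X i : MvPolynomial (Fin 2) K) = 0 := by
  simp [restrictToAxis, h]

@[simp]
lemma restrictToAxis_aeval_X_self (j : Fin 2) (p : Polynomial K) :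
    restrictToAxis j (Polynomial.aeval (X j : MvPolynomial (Fin 2) K) p) = p := by
  rw [← Polynomial.aeval_algHom_apply, restrictToAxis_X_self, Polynomial.aeval_X_left_apply]

lemma coeff_zero_restrictToAxis (j : Fin 2) (w : MvPolynomial (Fin 2) K) :
    (restrictToAxis j w).coeff 0 = constantCoeff w := by
  rw [← Polynomial.constantCoeff_apply]
  change (Polynomial.constantCoeff.comp (restrictToAxis (K := K) j).toRingHom) w = _
  congr 1
  refine MvPolynomial.ringHom_ext (fun a => ?_) (fun i => ?_)
  · simp [restrictToAxis]
  · by_cases h : i = j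
    · subst h; simp
    · simp [h]

lemma exists_eq_aeval_add_X_mul_aeval_add_X_mul_X_mul (w : MvPolynomial (Fin 2) K) :
    ∃ (p q : Polynomial K) (r : MvPolynomial (Fin 2) K),
      w = Polynomial.aeval (X 0) p + X 1 * Polynomial.aeval (X 1) q + X 0 * X 1 * r := by
  induction w using MvPolynomial.induction_on with
  | C a => exact ⟨Polynomial.C a, 0, 0, by simp⟩
  | add v w hv hw =>
    obtain ⟨p₁, q₁, r₁, rfl⟩ := hv
    obtain ⟨p₂, q₂, r₂, rfl⟩ := hw
    exact ⟨p₁ + p₂, q₁ + q₂, r₁ + r₂, by simp only [map_add]; ring⟩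
  | mul_X w i hw =>
    obtain ⟨p, q, r, rfl⟩ := hw
    fin_cases i
    · refine ⟨Polynomial.X * p, 0, Polynomial.aeval (X 1) q + X 0 * r, ?_⟩
      simp only [map_mul, map_zero, Polynomial.aeval_X, Fin.zero_eta]
      ring
    · -- `p = X * p.divX + C (p.coeff 0)`; only the constant term survives multiplication by `X 1`
      refine ⟨0, Polynomial.C (p.coeff 0) + Polynomial.X * q,
        Polynomial.aeval (X 0) p.divX + X 1 * r, ?_⟩
      conv_lhs => rw [← Polynomial.X_mul_divX_add p]
      simp only [map_add, map_mul, map_zero, Polynomial.aeval_X, Polynomial.aeval_C,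
        algebraMap_eq, Fin.mk_one]
      ring

lemma mem_span_X_zero_mul_X_one_iff {w : MvPolynomial (Fin 2) K} :
    w ∈ 𝔞 ↔ ∀ j, restrictToAxis j w = 0 := by
  constructor
  · rintro hw j
    obtain ⟨s, rfl⟩ := Ideal.mem_span_singleton'.mp hw
    fin_cases j <;> simp
  · intro hw
    obtain ⟨p, q, r, rfl⟩ := exists_eq_aeval_add_X_mul_aeval_add_X_mul_X_mul w
    have hp : p = 0 := by simpa using hw 0
    subst hp
    have hq : q = 0 := by simpa using hw 1
    subst hq
    simpa using Ideal.mul_mem_right r _ (Ideal.mem_span_singleton_self _)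

lemma exists_sub_X_mul_aeval_mem_span {i j : Fin 2} (hij : i ≠ j) {w : MvPolynomial (Fin 2) K}
    (hw : restrictToAxis i w = 0) :
    ∃ f : Polynomial K, w - X j * Polynomial.aeval (X j) f ∈ 𝔞 := by
  have hdvd : Polynomial.X ∣ restrictToAxis j w := by
    rw [Polynomial.X_dvd_iff, coeff_zero_restrictToAxis, ← coeff_zero_restrictToAxis i, hw,
      Polynomial.coeff_zero]
  obtain ⟨f, hf⟩ := hdvd
  refine ⟨f, mem_span_X_zero_mul_X_one_iff.mpr fun k => ?_⟩
  rcases eq_or_ne k j with rfl | hkj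
  · simp [hf]
  · obtain rfl : k = i := by omega
    simp [hw, restrictToAxis_X_of_ne hkj.symm]

local notation "𝒪" => MvPolynomial (Fin 2) K ⧸ 𝔞

lemma mk_X_mul_X_eq_zero {i j : Fin 2} (hij : i ≠ j) :
    Ideal.Quotient.mk 𝔞 (X i * X j : MvPolynomial (Fin 2) K) = 0 := by
  rw [Ideal.Quotient.eq_zero_iff_mem]
  fin_cases i <;> fin_cases j <;> simp_all [mul_comm]

lemma eq_of_mk_X_mul_aeval_eq (j : Fin 2) {f f' : Polynomial K}
    (h : Ideal.Quotient.mk 𝔞 (X j * Polynomial.aeval (X j) f) =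
      Ideal.Quotient.mk 𝔞 (X j * Polynomial.aeval (X j) f')) : f = f' := by
  have := mem_span_X_zero_mul_X_one_iff.mp (Ideal.Quotient.eq.mp h) j
  rw [map_sub, sub_eq_zero] at this
  simpa using Polynomial.isRegular_X.left (by simpa using this)

lemma exists_apply_mk_X_eq (D : Derivation K 𝒪 𝒪) (j : Fin 2) :
    ∃ f : Polynomial K, D (Ideal.Quotient.mk 𝔞 (X j)) =
      Ideal.Quotient.mk 𝔞 (X j * Polynomial.aeval (X j) f) := by
  obtain ⟨i, hij⟩ : ∃ i, i ≠ j := ⟨j + 1, by omega⟩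
  obtain ⟨P, hP⟩ := Ideal.Quotient.mk_surjective (D (Ideal.Quotient.mk 𝔞 (X j)))
  have hPi : restrictToAxis i P = 0 := by
    obtain ⟨Q, hQ⟩ := Ideal.Quotient.mk_surjective (D (Ideal.Quotient.mk 𝔞 (X i)))
    have hxy : D (Ideal.Quotient.mk 𝔞 (X i * X j)) = 0 := by
      rw [mk_X_mul_X_eq_zero hij, map_zero]
    have hmem : X i * P + X j * Q ∈ 𝔞 := by
      rw [← Ideal.Quotient.eq_zero_iff_mem, map_add, map_mul, map_mul, hP, hQ]
      rwa [map_mul, D.leibniz, smul_eq_mul, smul_eq_mul] at hxy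
    simpa [restrictToAxis_X_of_ne hij.symm] using mem_span_X_zero_mul_X_one_iff.mp hmem i
  obtain ⟨f, hf⟩ := exists_sub_X_mul_aeval_mem_span hij hPi
  exact ⟨f, hP ▸ Ideal.Quotient.eq.mpr hf⟩

end

lemma Derivation.apply_mk_eq_sum_pderiv {K σ : Type*} [CommRing K] [Fintype σ]
    {I : Ideal (MvPolynomial σ K)}
    (D : Derivation K (MvPolynomial σ K ⧸ I) (MvPolynomial σ K ⧸ I))
    (P : σ → MvPolynomial σ K)
    (hP : ∀ i, D (Ideal.Quotient.mk I (X i)) = Ideal.Quotient.mk I (P i))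
    (h : MvPolynomial σ K) :
    D (Ideal.Quotient.mk I h) = Ideal.Quotient.mk I (∑ i, P i * pderiv i h) := by
  set E : Derivation K (MvPolynomial σ K) (MvPolynomial σ K) := ∑ i, P i • pderiv i
  have hE : ∀ h, E h = ∑ i, P i * pderiv i h := fun h => by
    rw [← Derivation.coeFnAddMonoidHom_apply, map_sum, Finset.sum_apply]
    simp [Derivation.coeFnAddMonoidHom_apply]
  have hext : D.compAlgebraMap (MvPolynomial σ K) =
      (Algebra.linearMap (MvPolynomial σ K) (MvPolynomial σ K ⧸ I)).compDer E :=
    MvPolynomial.derivation_ext fun i => by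
      classical
      rw [Derivation.coe_comp]
      simp [hE, hP, pderiv_X, Pi.single_apply]
  simpa [hE] using congr($hext h)

/-- **Example 4.2 (affine form): derivations of `ℝ[x,y]/(xy)`.** Every `ℝ`-linear
derivation `d` of `A = ℝ[x,y]/(xy)` is induced, for unique one-variable polynomials
`f, g ∈ ℝ[t]`, by the derivation `x·f(x)·∂/∂x + y·g(y)·∂/∂y` of `ℝ[x,y]`:
for all `h ∈ ℝ[x,y]`, `d [h] = [x·f(x)·∂h/∂x + y·g(y)·∂h/∂y]`. -/
theorem derivations_of_xy_quotient
    (d : (MvPolynomial (Fin 2) ℝ ⧸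
          Ideal.span {(X 0 * X 1 : MvPolynomial (Fin 2) ℝ)}) →ₗ[ℝ]
         (MvPolynomial (Fin 2) ℝ ⧸
          Ideal.span {(X 0 * X 1 : MvPolynomial (Fin 2) ℝ)}))
    (hd : ∀ a b, d (a * b) = d a * b + a * d b) :
    ∃! fg : Polynomial ℝ × Polynomial ℝ,
      ∀ h : MvPolynomial (Fin 2) ℝ,
        d (Ideal.Quotient.mk _ h) =
          Ideal.Quotient.mk _
            (X 0 * Polynomial.aeval (X 0 : MvPolynomial (Fin 2) ℝ) fg.1 * pderiv 0 h
              + X 1 * Polynomial.aeval (X 1 : MvPolynomial (Fin 2) ℝ) fg.2 * pderiv 1 h) := by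
  let D : Derivation ℝ _ _ := Derivation.mk' d fun a b => by
    rw [hd, smul_eq_mul, smul_eq_mul, add_comm, mul_comm b]
  obtain ⟨f, hf⟩ := exists_apply_mk_X_eq D 0
  obtain ⟨g, hg⟩ := exists_apply_mk_X_eq D 1
  refine ⟨(f, g), fun h => ?_, fun ⟨f', g'⟩ h' => ?_⟩
  · simpa [D, Fin.sum_univ_two] using
      D.apply_mk_eq_sum_pderiv ![_, _] (Fin.forall_fin_two.mpr ⟨hf, hg⟩) h
  · have h0 := h' (X 0)
    have h1 := h' (X 1)
    simp only [pderiv_X_self, pderiv_X_of_ne (show (0 : Fin 2) ≠ 1 by decide),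
      pderiv_X_of_ne (show (1 : Fin 2) ≠ 0 by decide), mul_one, mul_zero, add_zero, zero_add]
      at h0 h1
    exact Prod.ext (eq_of_mk_X_mul_aeval_eq 0 (h0.symm.trans hf))
      (eq_of_mk_X_mul_aeval_eq 1 (h1.symm.trans hg))
end

section
/- Let a, b, c ∈ ℝ[x,y] satisfy the cocycle condition y·a + x·b = x·y·c. Then there exist unique one-variable polynomials f, g ∈ ℝ[t] and unique p, q ∈ ℝ[x,y] such that a = x·f(x) + x·y·p, b = y·g(y) + x·y·q, and c = f(x) + g(y) + y·p + x·q. (This is the explicit normal form behind the computation in Example 4.2: every degree-0 ad_δ-cocycle for the Koszul–Tate differential δ = xy ∂/∂ξ on ℝ[x,y][ξ] is, modulo the coboundaries [δ, ξ(p∂/∂x + q∂/∂y)] = xy·p·∂/∂x + xy·q·∂/∂y + (yp+xq)·ξ∂/∂ξ, uniquely of the form x f(x) ∂/∂x + y g(y) ∂/∂y, so that H⁰(𝔛(𝒪₋), ad_δ) ≅ { x f(x) ∂/∂x + y g(y) ∂/∂y | f, g ∈ C^∞(ℝ) } in the polynomial setting.) -/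
/-!
Setting `x = 0` in `y·a + x·b = x·y·c` gives `y·a(0,y) = 0`, so `x ∣ a`; likewise `y ∣ b`.
Writing `a = x·A` and `b = y·B` and cancelling `xy` gives `c = A + B`. Every polynomial in two
variables splits uniquely as `A = A(x,0) + y·p = f(x) + y·p`, and likewise `B = g(y) + x·q`,
which yields the normal form; uniqueness follows by cancelling `x` (resp. `y`) and setting
`y = 0` (resp. `x = 0`).
-/

open MvPolynomial

section
variable {σ R : Type*} [CommRing R]

theorem X_dvd_sub_aeval_update_zero [DecidableEq σ] (i : σ) (P : MvPolynomial σ R) :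
    X i ∣ P - aeval (Function.update X i 0) P := by
  let π := Ideal.Quotient.mkₐ R (Ideal.span {(X i : MvPolynomial σ R)})
  have hπ : π.comp (aeval (Function.update X i 0)) = π := by
    refine algHom_ext fun k => ?_
    by_cases hk : k = i
    · subst hk
      simp [π]
    · simp [Function.update_of_ne hk]
  rw [← Ideal.mem_span_singleton, ← Ideal.Quotient.eq]
  exact (congrArg (· P) (congrArg DFunLike.coe hπ)).symm

theorem X_dvd_of_X_dvd_X_mul [IsDomain R] {i j : σ} (hij : i ≠ j) {P : MvPolynomial σ R}
    (h : X i ∣ X j * P) : X i ∣ P :=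
  (X_prime.dvd_or_dvd h).resolve_left (by simpa using hij)

theorem aeval_X_add_X_mul_injective {i j : σ} (hij : i ≠ j) {f f' : Polynomial R}
    {p p' : MvPolynomial σ R}
    (h : Polynomial.aeval (X i) f + X j * p = Polynomial.aeval (X i) f' + X j * p') :
    f = f' ∧ p = p' := by
  classical
  have hf : Polynomial.aeval (X i : MvPolynomial σ R) f = Polynomial.aeval (X i) f' := by
    simpa [← Polynomial.aeval_algHom_apply, Function.update_of_ne hij] using
      congrArg (aeval (Function.update X j (0 : MvPolynomial σ R))) h
  refine ⟨Polynomial.toMvPolynomial_injective i hf, (isRegular_X (n := j)).left ?_⟩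
  simpa [hf] using h

end

theorem exists_eq_aeval_X_add_X_mul {R : Type*} [CommRing R] {i j : Fin 2} (hij : i ≠ j)
    (P : MvPolynomial (Fin 2) R) :
    ∃ (f : Polynomial R) (p : MvPolynomial (Fin 2) R), P = Polynomial.aeval (X i) f + X j * p := by
  have hrestrict : aeval (Function.update X j (0 : MvPolynomial (Fin 2) R)) =
      (Polynomial.aeval (X i)).comp (aeval (Pi.single i (Polynomial.X : Polynomial R))) := by
    refine algHom_ext fun k => ?_
    by_cases hk : k = i
    · subst hk; simp [Function.update_of_ne hij]
    · obtain rfl : k = j := by omega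
      simp [hk]
  obtain ⟨p, hp⟩ := X_dvd_sub_aeval_update_zero j P
  refine ⟨aeval (Pi.single i Polynomial.X) P, p, ?_⟩
  rw [← AlgHom.comp_apply, ← hrestrict]
  linear_combination hp

/-- **Normal form of degree-0 cocycles in Example 4.2.** If `a, b, c ∈ ℝ[x,y]` satisfy
the cocycle condition `y·a + x·b = x·y·c` (i.e. the vector field
`a ∂/∂x + b ∂/∂y + c ξ∂/∂ξ` commutes with `δ = xy ∂/∂ξ`), then there are unique
one-variable polynomials `f, g ∈ ℝ[t]` and unique `p, q ∈ ℝ[x,y]` with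
`a = x·f(x) + xy·p`, `b = y·g(y) + xy·q` and `c = f(x) + g(y) + y·p + x·q`. -/
theorem cocycle_normal_form_xy
    (a b c : MvPolynomial (Fin 2) ℝ)
    (hcocycle : X 1 * a + X 0 * b = X 0 * X 1 * c) :
    ∃! fgpq : (Polynomial ℝ × Polynomial ℝ) ×
        (MvPolynomial (Fin 2) ℝ × MvPolynomial (Fin 2) ℝ),
      a = X 0 * Polynomial.aeval (X 0 : MvPolynomial (Fin 2) ℝ) fgpq.1.1
            + X 0 * X 1 * fgpq.2.1 ∧
      b = X 1 * Polynomial.aeval (X 1 : MvPolynomial (Fin 2) ℝ) fgpq.1.2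
            + X 0 * X 1 * fgpq.2.2 ∧
      c = Polynomial.aeval (X 0 : MvPolynomial (Fin 2) ℝ) fgpq.1.1
            + Polynomial.aeval (X 1 : MvPolynomial (Fin 2) ℝ) fgpq.1.2
            + X 1 * fgpq.2.1 + X 0 * fgpq.2.2 := by
  obtain ⟨A, rfl⟩ : X 0 ∣ a := X_dvd_of_X_dvd_X_mul (j := 1) (by decide)
    ⟨X 1 * c - b, by linear_combination hcocycle⟩
  obtain ⟨B, rfl⟩ : X 1 ∣ b := X_dvd_of_X_dvd_X_mul (j := 0) (by decide)
    ⟨X 0 * c - X 0 * A, by linear_combination hcocycle⟩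
  have hc : c = A + B :=
    (isRegular_X.mul isRegular_X : IsRegular (X 0 * X 1 : MvPolynomial (Fin 2) ℝ)).left
      (by linear_combination -hcocycle)
  obtain ⟨f, p, rfl⟩ := exists_eq_aeval_X_add_X_mul (i := 0) (j := 1) (by decide) A
  obtain ⟨g, q, rfl⟩ := exists_eq_aeval_X_add_X_mul (i := 1) (j := 0) (by decide) B
  refine ⟨((f, g), (p, q)), ⟨by ring, by ring, by rw [hc]; ring⟩, ?_⟩
  rintro ⟨⟨f', g'⟩, p', q'⟩ ⟨ha, hb, -⟩
  dsimp only at ha hb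
  obtain ⟨rfl, rfl⟩ := aeval_X_add_X_mul_injective (f := f') (f' := f) (p := p') (p' := p)
    (by decide : (0 : Fin 2) ≠ 1) ((isRegular_X (n := 0)).left (by linear_combination ha.symm))
  obtain ⟨rfl, rfl⟩ := aeval_X_add_X_mul_injective (f := g') (f' := g) (p := q') (p' := q)
    (by decide : (1 : Fin 2) ≠ 0) ((isRegular_X (n := 1)).left (by linear_combination hb.symm))
  rfl
end
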